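/- arXiv:1908.08394 — 7 statements merged into one kernel-verified Lean document; each statement's English description precedes it below -/
import Mathlib

section
/- For all real x ≥ 0 and integers j ≥ 2, it holds that 1 - (j-1)/(x + j/2) ≤ (x/(x+1))^(j-1). -/
/-!
With `n = j - 1`, clearing denominators turns the inequality into
`(2x + 1 - n) (x + 1)^n ≤ x^n (2x + n + 1)`. Induction on `n` reduces the step to
`x^n (x + n + 1) ≤ (x + 1)^(n + 1)`, i.e. to the first two terms of the binomial expansion.
-/

section

variable {K : Type*} [Field K] [LinearOrder K] [IsStrictOrderedRing K] {x : K}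

lemma pow_mul_add_nat_add_one_le_add_one_pow (hx : 0 ≤ x) (n : ℕ) :
    x ^ n * (x + n + 1) ≤ (x + 1) ^ (n + 1) := by
  induction n with
  | zero => simp
  | succ n ih =>
    have hxn : 0 ≤ x ^ n := pow_nonneg hx n
    calc x ^ (n + 1) * (x + (n + 1 : ℕ) + 1)
        ≤ (x + 1) * (x ^ n * (x + n + 1)) := by
          push_cast
          rw [pow_succ]
          nlinarith [mul_nonneg hxn (Nat.cast_nonneg n : (0 : K) ≤ n)]
      _ ≤ (x + 1) * (x + 1) ^ (n + 1) := by gcongr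
      _ = (x + 1) ^ (n + 1 + 1) := by ring

lemma sub_nat_mul_add_one_pow_le (hx : 0 ≤ x) (n : ℕ) :
    (2 * x + 1 - n) * (x + 1) ^ n ≤ x ^ n * (2 * x + n + 1) := by
  induction n with
  | zero => simp
  | succ n ih =>
    have hA := pow_mul_add_nat_add_one_le_add_one_pow hx n
    calc (2 * x + 1 - (n + 1 : ℕ)) * (x + 1) ^ (n + 1)
        = (2 * x + 1 - n) * (x + 1) ^ n * (x + 1) - (x + 1) ^ (n + 1) := by push_cast; ring
      _ ≤ x ^ n * (2 * x + n + 1) * (x + 1) - x ^ n * (x + n + 1) := by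
          gcongr
      _ = x ^ (n + 1) * (2 * x + (n + 1 : ℕ) + 1) := by push_cast; ring

lemma one_sub_div_le_div_add_one_pow (hx : 0 ≤ x) (n : ℕ) :
    1 - n / (x + (n + 1) / 2) ≤ (x / (x + 1)) ^ n := by
  have hlhs : 1 - n / (x + (n + 1) / 2) = (2 * x + 1 - n) / (2 * x + n + 1) := by
    field_simp
    ring
  rw [hlhs, div_pow, div_le_div_iff₀ (by positivity) (by positivity)]
  exact sub_nat_mul_add_one_pow_le hx n

end

theorem stmt_0 (x : ℝ) (hx : 0 ≤ x) (j : ℕ) (hj : 2 ≤ j) :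
    1 - ((j : ℝ) - 1) / (x + (j : ℝ) / 2) ≤ (x / (x + 1)) ^ (j - 1) := by
  obtain ⟨n, rfl⟩ : ∃ n, j = n + 1 := ⟨j - 1, by omega⟩
  simpa using one_sub_div_le_div_add_one_pow hx n
end

section
/- Let X1 ~ Geo(p1), X2 ~ Geo(p2), and Y1, Y2 ~ Geo((p1+p2)/2) be independent geometric random variables with 0 < p1 ≤ p2 ≤ 1. Then for any positive integer j, P(X1 + X2 > j) ≥ P(Y1 + Y2 > j). -/
/-!
With failure probabilities `a = 1 - p₁`, `b = 1 - p₂`, conditioning on `X₁` gives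
`P(X₁ + X₂ > j) = a ^ j + (1 - a) * S_j(a, b)` with `S_j(a, b) = ∑_{i < j} a ^ i * b ^ (j - 1 - i)`,
and the `Y` side is the same expression at `a = b = q := (a + b) / 2`. By convexity of `x ↦ x ^ n`,
`q ^ n ≤ (a ^ n + b ^ n) / 2`; together with the recursion `2 S_{n+1} = a ^ n + b ^ n + (a + b) S_n`
this gives `S_j(q, q) ≤ S_j(a, b)`. Since `(a - b) S_j(a, b) = a ^ j - b ^ j`, the two tails differ by
`(1 - q) (S_j(a, b) - S_j(q, q)) + (a ^ j + b ^ j) / 2 - q ^ j ≥ 0`.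
-/

open MeasureTheory ProbabilityTheory Finset

lemma add_div_two_pow_le {a b : ℝ} (ha : 0 ≤ a) (hb : 0 ≤ b) (n : ℕ) :
    ((a + b) / 2) ^ n ≤ (a ^ n + b ^ n) / 2 := by
  have h := (convexOn_pow n).2 (Set.mem_Ici.2 ha) (Set.mem_Ici.2 hb)
    (by norm_num : (0 : ℝ) ≤ 1 / 2) (by norm_num : (0 : ℝ) ≤ 1 / 2) (by norm_num)
  simp only [smul_eq_mul] at h
  rw [show (1 / 2 : ℝ) * a + 1 / 2 * b = (a + b) / 2 by ring] at h
  linarith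

lemma geom_sum₂_add_div_two_le {a b : ℝ} (ha : 0 ≤ a) (hb : 0 ≤ b) (n : ℕ) :
    ∑ i ∈ range n, ((a + b) / 2) ^ i * ((a + b) / 2) ^ (n - 1 - i) ≤
      ∑ i ∈ range n, a ^ i * b ^ (n - 1 - i) := by
  induction n with
  | zero => simp
  | succ n ih =>
    simp only [Nat.add_sub_cancel, geom_sum₂_succ_eq]
    have hmul := geom_sum₂_mul a b n
    have hpow := add_div_two_pow_le ha hb n
    have hrec := mul_le_mul_of_nonneg_left ih (by positivity : (0 : ℝ) ≤ (a + b) / 2)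
    linarith

def geomSumTail (a b : ℝ) (j : ℕ) : ℝ :=
  a ^ j + (1 - a) * ∑ i ∈ range j, a ^ i * b ^ (j - 1 - i)

lemma geomSumTail_add_div_two_le {a b : ℝ} (ha : 0 ≤ a) (hb : 0 ≤ b) (hab : a + b ≤ 2) (j : ℕ) :
    geomSumTail ((a + b) / 2) ((a + b) / 2) j ≤ geomSumTail a b j := by
  unfold geomSumTail
  have hmul := geom_sum₂_mul a b j
  have hpow := add_div_two_pow_le ha hb j
  have hsum := mul_le_mul_of_nonneg_left (geom_sum₂_add_div_two_le ha hb j)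
    (by linarith : (0 : ℝ) ≤ 1 - (a + b) / 2)
  linarith

def geomPMF (p : ℝ) (k : ℕ) : ℝ := if k = 0 then 0 else (1 - p) ^ (k - 1) * p

lemma sum_range_geomPMF (p : ℝ) (m : ℕ) :
    ∑ k ∈ range (m + 1), geomPMF p k = 1 - (1 - p) ^ m := by
  rw [sum_range_succ']
  simp only [geomPMF, Nat.add_sub_cancel, Nat.add_one_ne_zero, ↓reduceIte, add_zero, ← sum_mul]
  linear_combination (-1 : ℝ) * geom_sum_mul (1 - p) m

lemma sum_geomPMF_mul_geomCDF (p r : ℝ) (j : ℕ) :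
    ∑ k ∈ range (j + 1), geomPMF p k * (1 - (1 - r) ^ (j - k)) =
      1 - geomSumTail (1 - p) (1 - r) j := by
  have hterm : ∀ i ∈ range j, geomPMF p (i + 1) * (1 - (1 - r) ^ (j - (i + 1))) =
      p * (1 - p) ^ i - p * ((1 - p) ^ i * (1 - r) ^ (j - 1 - i)) := by
    intro i _
    rw [geomPMF, if_neg (Nat.add_one_ne_zero i), Nat.add_sub_cancel, Nat.sub_sub, Nat.add_comm 1]
    ring
  rw [sum_range_succ', sum_congr rfl hterm, sum_sub_distrib, ← mul_sum, ← mul_sum, geomSumTail]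
  simp only [geomPMF, ↓reduceIte, zero_mul, add_zero]
  linear_combination (-1 : ℝ) * geom_sum_mul (1 - p) j

section

variable {Ω : Type*} [MeasurableSpace Ω] {μ : Measure Ω}

lemma measureReal_le_eq_sum [IsFiniteMeasure μ] {X : Ω → ℕ} (hX : Measurable X) (m : ℕ) :
    μ.real {ω | X ω ≤ m} = ∑ k ∈ range (m + 1), μ.real {ω | X ω = k} := by
  have hset : {ω | X ω ≤ m} = X ⁻¹' ↑(Iic m) := by ext; simp
  rw [hset, Nat.range_succ_eq_Iic,
    ← sum_measureReal_preimage_singleton _ fun k _ => hX (measurableSet_singleton k)]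
  rfl

lemma ProbabilityTheory.IndepFun.measureReal_add_le_eq_sum [IsFiniteMeasure μ] {X Y : Ω → ℕ}
    (hX : Measurable X) (hY : Measurable Y) (hXY : IndepFun X Y μ) (j : ℕ) :
    μ.real {ω | X ω + Y ω ≤ j} =
      ∑ k ∈ range (j + 1), μ.real {ω | X ω = k} * μ.real {ω | Y ω ≤ j - k} := by
  have hdecomp : {ω | X ω + Y ω ≤ j} =
      ⋃ k ∈ range (j + 1), X ⁻¹' {k} ∩ Y ⁻¹' Set.Iic (j - k) := by
    ext ω
    simp only [Set.mem_ofPred_eq, Set.mem_iUnion, Set.mem_inter_iff, Set.mem_preimage,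
      Set.mem_singleton_iff, Set.mem_Iic, mem_range]
    constructor
    · intro h; exact ⟨X ω, by omega, rfl, by omega⟩
    · rintro ⟨k, hk, rfl, h⟩; omega
  rw [hdecomp, measureReal_biUnion_finset]
  · refine sum_congr rfl fun k _ => ?_
    simp only [measureReal_def,
      hXY.measure_inter_preimage_eq_mul _ _ (measurableSet_singleton k) measurableSet_Iic,
      ENNReal.toReal_mul]
    rfl
  · intro i _ k _ hik
    exact Set.disjoint_left.mpr fun ω h1 h2 => hik (h1.1.symm.trans h2.1)
  · exact fun k _ => (hX (measurableSet_singleton k)).inter (hY measurableSet_Iic)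

lemma ProbabilityTheory.IndepFun.measureReal_lt_add_eq_geomSumTail [IsProbabilityMeasure μ]
    {X Y : Ω → ℕ} (hX : Measurable X) (hY : Measurable Y) (hXY : IndepFun X Y μ) {p r : ℝ}
    (hlawX : ∀ k, μ.real {ω | X ω = k} = geomPMF p k)
    (hlawY : ∀ k, μ.real {ω | Y ω = k} = geomPMF r k) (j : ℕ) :
    μ.real {ω | j < X ω + Y ω} = geomSumTail (1 - p) (1 - r) j := by
  have hcompl : {ω | j < X ω + Y ω} = {ω | X ω + Y ω ≤ j}ᶜ := by ext ω; simp
  have hmeas : MeasurableSet {ω | X ω + Y ω ≤ j} := measurableSet_le (hX.add hY) measurable_const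
  rw [hcompl, probReal_compl_eq_one_sub hmeas, hXY.measureReal_add_le_eq_sum hX hY]
  simp only [hlawX, measureReal_le_eq_sum hY, hlawY, sum_range_geomPMF, sum_geomPMF_mul_geomCDF,
    sub_sub_cancel]

end

theorem stmt_2_general {Ω : Type*} [MeasureSpace Ω] [IsProbabilityMeasure (ℙ : Measure Ω)]
    (X1 X2 Y1 Y2 : Ω → ℕ)
    (hX1m : Measurable X1) (hX2m : Measurable X2)
    (hY1m : Measurable Y1) (hY2m : Measurable Y2)
    (p1 p2 : ℝ) (hp1 : 0 < p1) (h12 : p1 ≤ p2) (hp2 : p2 ≤ 1)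
    (hlaw1 : ∀ k : ℕ, (ℙ {ω | X1 ω = k}).toReal =
      if k = 0 then 0 else (1 - p1) ^ (k - 1) * p1)
    (hlaw2 : ∀ k : ℕ, (ℙ {ω | X2 ω = k}).toReal =
      if k = 0 then 0 else (1 - p2) ^ (k - 1) * p2)
    (hlawY1 : ∀ k : ℕ, (ℙ {ω | Y1 ω = k}).toReal =
      if k = 0 then 0 else (1 - (p1 + p2) / 2) ^ (k - 1) * ((p1 + p2) / 2))
    (hlawY2 : ∀ k : ℕ, (ℙ {ω | Y2 ω = k}).toReal =
      if k = 0 then 0 else (1 - (p1 + p2) / 2) ^ (k - 1) * ((p1 + p2) / 2))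
    (hindep : iIndepFun ![X1, X2, Y1, Y2] ℙ)
    (j : ℕ) :
    ℙ {ω | j < Y1 ω + Y2 ω} ≤ ℙ {ω | j < X1 ω + X2 ω} := by
  have hX : IndepFun X1 X2 ℙ := by simpa using hindep.indepFun (show (0 : Fin 4) ≠ 1 by decide)
  have hY : IndepFun Y1 Y2 ℙ := by simpa using hindep.indepFun (show (2 : Fin 4) ≠ 3 by decide)
  rw [← ENNReal.toReal_le_toReal (measure_ne_top _ _) (measure_ne_top _ _)]
  change (ℙ : Measure Ω).real _ ≤ (ℙ : Measure Ω).real _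
  rw [hY.measureReal_lt_add_eq_geomSumTail hY1m hY2m hlawY1 hlawY2,
    hX.measureReal_lt_add_eq_geomSumTail hX1m hX2m hlaw1 hlaw2,
    show 1 - (p1 + p2) / 2 = ((1 - p1) + (1 - p2)) / 2 by ring]
  exact geomSumTail_add_div_two_le (by linarith) (by linarith) (by linarith) j

theorem stmt_2 {Ω : Type*} [MeasureSpace Ω] [IsProbabilityMeasure (ℙ : Measure Ω)]
    (X1 X2 Y1 Y2 : Ω → ℕ)
    (hX1m : Measurable X1) (hX2m : Measurable X2)
    (hY1m : Measurable Y1) (hY2m : Measurable Y2)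
    (p1 p2 : ℝ) (hp1 : 0 < p1) (h12 : p1 ≤ p2) (hp2 : p2 ≤ 1)
    (hlaw1 : ∀ k : ℕ, (ℙ {ω | X1 ω = k}).toReal =
      if k = 0 then 0 else (1 - p1) ^ (k - 1) * p1)
    (hlaw2 : ∀ k : ℕ, (ℙ {ω | X2 ω = k}).toReal =
      if k = 0 then 0 else (1 - p2) ^ (k - 1) * p2)
    (hlawY1 : ∀ k : ℕ, (ℙ {ω | Y1 ω = k}).toReal =
      if k = 0 then 0 else (1 - (p1 + p2) / 2) ^ (k - 1) * ((p1 + p2) / 2))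
    (hlawY2 : ∀ k : ℕ, (ℙ {ω | Y2 ω = k}).toReal =
      if k = 0 then 0 else (1 - (p1 + p2) / 2) ^ (k - 1) * ((p1 + p2) / 2))
    (hindep : iIndepFun ![X1, X2, Y1, Y2] ℙ)
    (j : ℕ) (hj : 1 ≤ j) :
    ℙ {ω | j < Y1 ω + Y2 ω} ≤ ℙ {ω | j < X1 ω + X2 ω} :=
  stmt_2_general X1 X2 Y1 Y2 hX1m hX2m hY1m hY2m p1 p2 hp1 h12 hp2 hlaw1 hlaw2 hlawY1 hlawY2 hindep
    j
end

section
/- Let X1, ..., Xm be independent geometric random variables where Xi has success probability pi ∈ (0,1]. Then P(Σ_{i=1}^m X_i > m²/(4·Σ_{i=1}^m p_i)) ≥ 1 - 16/(9m). -/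
/-!
A lower-tail Chernoff bound at the parameter `q = (∑ pᵢ) / m`, the mean success probability.
For a geometric variable, `E[exp (-q X)] = p / (exp q - 1 + p) ≤ p / (p + q) ≤ exp (-q / (p + q))`,
and by convexity of `p ↦ q / (p + q)` the exponents sum to at least `m / 2`. Hence
`P(∑ Xᵢ ≤ ε) ≤ exp (q ε - m / 2) = exp (-m / 4)` for `ε = m² / (4 ∑ pᵢ)`, and
`exp (-m / 4) ≤ 16 / (9 m)` because `exp y ≥ e y` and `e > 9 / 4`.
-/

open MeasureTheory ProbabilityTheory Real Finset

section GeometricMgf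

variable {Ω : Type*} [MeasurableSpace Ω] {μ : Measure Ω}

lemma integral_comp_nat_eq_tsum {X : Ω → ℕ} (hX : Measurable X) {f : ℕ → ℝ}
    (hf : Integrable f (μ.map X)) :
    ∫ ω, f (X ω) ∂μ = ∑' k, μ.real {ω | X ω = k} * f k := by
  rw [← integral_map hX.aemeasurable hf.aestronglyMeasurable, integral_countable hf]
  congr 1 with k
  rw [map_measureReal_apply hX (measurableSet_singleton k), smul_eq_mul]
  rfl

lemma one_sub_mul_exp_neg_lt_one {p s : ℝ} (hp : 0 < p) (hs : 0 ≤ s) :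
    (1 - p) * exp (-s) < 1 := by
  have : exp (-s) ≤ 1 := exp_le_one_iff.mpr (by linarith)
  nlinarith [exp_pos (-s)]

lemma hasSum_geometric_mul_exp_neg {p s : ℝ} (hp : 0 < p) (hp' : p ≤ 1) (hs : 0 ≤ s) :
    HasSum (fun k : ℕ => (if k = 0 then 0 else (1 - p) ^ (k - 1) * p) * exp (-s * k))
      (p * exp (-s) / (1 - (1 - p) * exp (-s))) := by
  have hr0 : 0 ≤ (1 - p) * exp (-s) := by have := exp_pos (-s); positivity
  have hr1 := one_sub_mul_exp_neg_lt_one hp hs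
  rw [← hasSum_nat_add_iff' 1]
  have hshift : ∀ j : ℕ, (if j + 1 = 0 then 0 else (1 - p) ^ (j + 1 - 1) * p) *
      exp (-s * ((j + 1 : ℕ) : ℝ)) = p * exp (-s) * ((1 - p) * exp (-s)) ^ j := by
    intro j
    rw [if_neg j.succ_ne_zero, Nat.add_sub_cancel, mul_pow, ← exp_nat_mul]
    rw [show -s * ((j + 1 : ℕ) : ℝ) = j * -s + -s by push_cast; ring, exp_add]
    ring
  simp only [hshift, range_one, sum_singleton, if_true, zero_mul, sub_zero]
  rw [div_eq_mul_inv]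
  exact (hasSum_geometric_of_lt_one hr0 hr1).mul_left _

variable [IsFiniteMeasure μ]

lemma mgf_neg_eq_of_geometric {X : Ω → ℕ} (hX : Measurable X) {p : ℝ} (hp : 0 < p)
    (hp' : p ≤ 1)
    (hlaw : ∀ k, μ.real {ω | X ω = k} = if k = 0 then 0 else (1 - p) ^ (k - 1) * p)
    {s : ℝ} (hs : 0 ≤ s) :
    mgf (fun ω => (X ω : ℝ)) μ (-s) = p * exp (-s) / (1 - (1 - p) * exp (-s)) := by
  have hbdd : Integrable (fun k : ℕ => exp (-s * k)) (μ.map X) := by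
    refine Integrable.of_bound measurable_from_top.aestronglyMeasurable 1
      (Filter.Eventually.of_forall fun k => ?_)
    rw [norm_of_nonneg (exp_pos _).le, exp_le_one_iff]
    exact mul_nonpos_of_nonpos_of_nonneg (neg_nonpos.mpr hs) k.cast_nonneg
  rw [mgf, integral_comp_nat_eq_tsum hX hbdd]
  simp only [hlaw]
  exact (hasSum_geometric_mul_exp_neg hp hp' hs).tsum_eq

lemma mgf_neg_le_of_geometric {X : Ω → ℕ} (hX : Measurable X) {p : ℝ} (hp : 0 < p)
    (hp' : p ≤ 1)
    (hlaw : ∀ k, μ.real {ω | X ω = k} = if k = 0 then 0 else (1 - p) ^ (k - 1) * p)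
    {s : ℝ} (hs : 0 ≤ s) :
    mgf (fun ω => (X ω : ℝ)) μ (-s) ≤ p / (p + s) := by
  have hexp : exp (-s) * exp s = 1 := by rw [← exp_add, neg_add_cancel, exp_zero]
  have hden : 0 < 1 - (1 - p) * exp (-s) := sub_pos.mpr (one_sub_mul_exp_neg_lt_one hp hs)
  have hclosed : p * exp (-s) / (1 - (1 - p) * exp (-s)) = p / (exp s - (1 - p)) := by
    rw [div_eq_div_iff hden.ne' (by linarith [add_one_le_exp s])]
    linear_combination p * hexp
  rw [mgf_neg_eq_of_geometric hX hp hp' hlaw hs, hclosed]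
  gcongr
  linarith [add_one_le_exp s]

end GeometricMgf

lemma measureReal_sum_le_le_exp_mul_prod_mgf {Ω ι : Type*} [MeasurableSpace Ω] {μ : Measure Ω}
    [Fintype ι] {Y : ι → Ω → ℝ} (hindep : iIndepFun Y μ) (hY : ∀ i, Measurable (Y i))
    (hY0 : ∀ i ω, 0 ≤ Y i ω) (ε : ℝ) {t : ℝ} (ht : 0 ≤ t) :
    μ.real {ω | ∑ i, Y i ω ≤ ε} ≤ exp (t * ε) * ∏ i, mgf (Y i) μ (-t) := by
  have := hindep.isProbabilityMeasure
  have hS : ∑ i, Y i = fun ω => ∑ i, Y i ω := by ext ω; exact Finset.sum_apply ω univ Y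
  have hint : Integrable (fun ω => exp (-t * ∑ i, Y i ω)) μ := by
    refine Integrable.of_bound ?_ 1 (Filter.Eventually.of_forall fun ω => ?_)
    · exact ((Finset.measurable_sum _ fun i _ => hY i).const_mul _).exp.aestronglyMeasurable
    rw [norm_of_nonneg (exp_pos _).le, exp_le_one_iff]
    exact mul_nonpos_of_nonpos_of_nonneg (neg_nonpos.mpr ht) (sum_nonneg fun i _ => hY0 i ω)
  have hchernoff :=
    measure_le_le_exp_mul_mgf (X := ∑ i, Y i) ε (neg_nonpos.mpr ht) (by rwa [hS])
  rwa [hindep.mgf_sum hY, neg_neg, hS] at hchernoff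

section

variable {ι : Type*} [Fintype ι] {p : ι → ℝ} {q : ℝ}

lemma card_div_two_le_sum_div_add (hp : ∀ i, 0 ≤ p i) (hq : 0 < q)
    (hmean : ∑ i, p i = Fintype.card ι * q) :
    (Fintype.card ι : ℝ) / 2 ≤ ∑ i, q / (p i + q) := by
  -- tangent line at `p i = q` of the convex function `x ↦ q / (x + q)`
  have htangent : ∀ i, 1 / 2 - (p i - q) / (4 * q) ≤ q / (p i + q) := fun i => by
    have hpq : 0 < p i + q := by linarith [hp i]
    rw [div_sub_div _ _ two_ne_zero (by positivity), div_le_div_iff₀ (by positivity) hpq]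
    nlinarith [sq_nonneg (p i - q)]
  calc (Fintype.card ι : ℝ) / 2 = ∑ i, (1 / 2 - (p i - q) / (4 * q)) := by
        rw [sum_sub_distrib, ← sum_div (f := fun i => p i - q), sum_sub_distrib, hmean]
        simp only [sum_const, card_univ, nsmul_eq_mul, sub_self, zero_div, sub_zero]; ring
    _ ≤ ∑ i, q / (p i + q) := sum_le_sum fun i _ => htangent i

lemma prod_div_add_le_exp (hp : ∀ i, 0 ≤ p i) (hq : 0 < q)
    (hmean : ∑ i, p i = Fintype.card ι * q) :
    ∏ i, p i / (p i + q) ≤ exp (-(Fintype.card ι / 2)) := by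
  have hterm : ∀ i, p i / (p i + q) ≤ exp (-(q / (p i + q))) := fun i => by
    have hpq : p i + q ≠ 0 := by linarith [hp i]
    calc p i / (p i + q) = 1 - q / (p i + q) := by field_simp; ring
      _ ≤ exp (-(q / (p i + q))) := one_sub_le_exp_neg _
  calc ∏ i, p i / (p i + q)
      ≤ ∏ i, exp (-(q / (p i + q))) :=
        prod_le_prod (fun i _ => div_nonneg (hp i) (by linarith [hp i])) fun i _ => hterm i
    _ = exp (-∑ i, q / (p i + q)) := by rw [← exp_sum, sum_neg_distrib]
    _ ≤ exp (-(Fintype.card ι / 2)) :=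
        exp_le_exp.mpr (neg_le_neg (card_div_two_le_sum_div_add hp hq hmean))

end

lemma exp_neg_div_four_le {x : ℝ} (hx : 0 < x) : exp (-(x / 4)) ≤ 16 / (9 * x) := by
  have hlin : exp 1 * (x / 4) ≤ exp (x / 4) := by
    have := add_one_le_exp (x / 4 - 1)
    rw [show x / 4 = 1 + (x / 4 - 1) by ring, exp_add]
    gcongr
    linarith
  have he : (9 : ℝ) / 4 < exp 1 := lt_trans (by norm_num) exp_one_gt_d9
  rw [exp_neg, inv_le_comm₀ (exp_pos _) (by positivity), inv_div]
  nlinarith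

lemma one_sub_le_measureReal_lt_of_measureReal_le {Ω : Type*} [MeasurableSpace Ω]
    {μ : Measure Ω} [IsProbabilityMeasure μ] {f : Ω → ℝ} (hf : Measurable f) {ε δ : ℝ}
    (h : μ.real {ω | f ω ≤ ε} ≤ δ) : 1 - δ ≤ μ.real {ω | ε < f ω} := by
  have hcompl : {ω | ε < f ω} = {ω | f ω ≤ ε}ᶜ := by ext ω; simp
  rw [hcompl, measureReal_compl (measurableSet_le hf measurable_const), probReal_univ]
  linarith

theorem stmt_4 {Ω : Type*} [MeasureSpace Ω] [IsProbabilityMeasure (ℙ : Measure Ω)]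
    (m : ℕ) (hm : 1 ≤ m) (X : Fin m → Ω → ℕ) (hXm : ∀ i, Measurable (X i))
    (p : Fin m → ℝ) (hp : ∀ i, 0 < p i) (hp' : ∀ i, p i ≤ 1)
    (hlaw : ∀ (i : Fin m) (k : ℕ), (ℙ {ω | X i ω = k}).toReal =
      if k = 0 then 0 else (1 - p i) ^ (k - 1) * p i)
    (hindep : iIndepFun X ℙ) :
    1 - 16 / (9 * (m : ℝ)) ≤
      (ℙ {ω | (m : ℝ) ^ 2 / (4 * ∑ i, p i) < ((∑ i, X i ω : ℕ) : ℝ)}).toReal := by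
  have hm0 : (0 : ℝ) < m := by exact_mod_cast hm
  have hsum : 0 < ∑ i, p i := sum_pos (fun i _ => hp i) ⟨⟨0, hm⟩, mem_univ _⟩
  set q := (∑ i, p i) / m with hq_def
  have hq : 0 < q := div_pos hsum hm0
  have hmean : ∑ i, p i = Fintype.card (Fin m) * q := by
    rw [Fintype.card_fin, hq_def, mul_div_cancel₀ _ hm0.ne']
  set ε := (m : ℝ) ^ 2 / (4 * ∑ i, p i) with hε_def
  have hqε : q * ε = m / 4 := by rw [hq_def, hε_def]; field_simp
  have hY : ∀ i, Measurable fun ω => (X i ω : ℝ) := fun i => measurable_from_top.comp (hXm i)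
  push_cast
  refine one_sub_le_measureReal_lt_of_measureReal_le (Finset.measurable_sum _ fun i _ => hY i) ?_
  calc _ ≤ exp (q * ε) * ∏ i, mgf (fun ω => (X i ω : ℝ)) ℙ (-q) :=
        measureReal_sum_le_le_exp_mul_prod_mgf
          (hindep.comp (fun _ (n : ℕ) => (n : ℝ)) fun _ => measurable_from_top)
          hY (fun i ω => (X i ω).cast_nonneg) ε hq.le
    _ ≤ exp (q * ε) * ∏ i, p i / (p i + q) := by
        gcongr with i
        · exact fun i _ => mgf_nonneg
        · exact mgf_neg_le_of_geometric (hXm i) (hp i) (hp' i) (hlaw i) hq.le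
    _ ≤ exp (m / 4) * exp (-(m / 2)) := by
        rw [hqε]
        gcongr
        simpa using prod_div_add_le_exp (fun i => (hp i).le) hq hmean
    _ = exp (-(m / 4)) := by rw [← exp_add]; ring_nf
    _ ≤ 16 / (9 * m) := exp_neg_div_four_le hm0
end

section
/- Let q ∈ (0,1) and let A_k be the k×k symmetric tridiagonal matrix with diagonal entries (2 + 2nμ/(L-μ), ..., 2 + 2nμ/(L-μ), 1 + 2nμ/(L-μ)) and off-diagonal entries -1, where q is a root of z² - (2 + 2nμ/(L-μ))z + 1 = 0 and q = (α-1)/(α+1) with 2/(α+1) = 1 - q. Then the solution y of A_k y = (2ξ/(α+1))·e_k is y_j = ξ·q^(k+1)/(1+q^(2k+1)) · (q^(-j) - q^j) for j = 1, ..., k. -/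
/-!
With `c = q + q⁻¹`, the sequence `f m = q⁻ᵐ - qᵐ` satisfies the three-term recurrence
`c f (m + 1) = f m + f (m + 2)` and vanishes at `m = 0`, so `j ↦ f (j + 1)` is annihilated by every
row of `A` but the last (the first row included). In the last row the diagonal entry is `c - 1`,
which leaves the residual `f (k + 1) - f k = (1 - q) (1 + q ^ (2k + 1)) / q ^ (k + 1)`; the
normalising constant turns this into `ξ (1 - q) = 2ξ / (α + 1)`.
-/

open Finset Matrix

lemma tridiagonal_mulVec_apply {k : ℕ} (a b : ℝ) (A : Matrix (Fin k) (Fin k) ℝ)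
    (hA : ∀ i j : Fin k, A i j =
      if i = j then (if i.val = k - 1 then b else a)
      else if i.val + 1 = j.val ∨ j.val + 1 = i.val then -1 else 0)
    (f : ℕ → ℝ) (hf : f 0 = 0) (i : Fin k) :
    (A *ᵥ fun j => f (j.val + 1)) i =
      if i.val = k - 1 then b * f (i + 1) - f i else a * f (i + 1) - f i - f (i + 2) := by
  let g : ℕ → ℝ := fun p =>
    (if p = i.val + 1 then (if i.val = k - 1 then b else a) * f p else 0)
      + (if p = i.val + 2 then -f p else 0) + (if p = i.val then -f p else 0)
  have hrow : ∀ j : Fin k, A i j * f (j.val + 1) = g (j.val + 1) := by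
    intro j
    simp only [g, hA, Fin.ext_iff]
    split_ifs <;> first | omega | ring
  -- Reindexing by `p = j + 1 ∈ [0, k]` is free since `f 0 = 0`, and puts the first row in line.
  have hsum : (A *ᵥ fun j => f (j.val + 1)) i = ∑ p ∈ range (k + 1), g p := by
    rw [Finset.sum_range_succ', ← Fin.sum_univ_eq_sum_range (fun m => g (m + 1))]
    simp [mulVec, dotProduct, hrow, g, hf]
  have hi := i.isLt
  rw [hsum]
  simp only [g, sum_add_distrib, sum_ite_eq', mem_range]
  split_ifs <;> first | omega | ring

noncomputable def invPowSubPow (q : ℝ) (m : ℕ) : ℝ := (q ^ m)⁻¹ - q ^ m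

@[simp]
lemma invPowSubPow_zero (q : ℝ) : invPowSubPow q 0 = 0 := by
  simp [invPowSubPow]

lemma invPowSubPow_recurrence {q c : ℝ} (hq : q ≠ 0) (hc : c * q = q ^ 2 + 1) (m : ℕ) :
    c * invPowSubPow q (m + 1) - invPowSubPow q m - invPowSubPow q (m + 2) = 0 := by
  unfold invPowSubPow
  rw [pow_succ, pow_add]
  field_simp
  linear_combination (1 - (q ^ m) ^ 2 * q ^ 2) * hc

lemma invPowSubPow_succ_sub {q : ℝ} (hq : q ≠ 0) (m : ℕ) :
    invPowSubPow q (m + 1) - invPowSubPow q m = (1 - q) * (1 + q ^ (2 * m + 1)) / q ^ (m + 1) := by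
  unfold invPowSubPow
  field_simp
  ring

theorem stmt_9_general (n : ℕ) (L μ : ℝ)
    (α q ξ : ℝ) (hα : 1 < α) (hq : q = (α - 1) / (α + 1))
    (hq0 : 0 < q)
    (hroot : q ^ 2 - (2 + 2 * n * μ / (L - μ)) * q + 1 = 0)
    (k : ℕ)
    (A : Matrix (Fin k) (Fin k) ℝ)
    (hA : ∀ i j : Fin k, A i j =
      if i = j then (if i.val = k - 1 then 1 + 2 * n * μ / (L - μ) else 2 + 2 * n * μ / (L - μ))
      else if i.val + 1 = j.val ∨ j.val + 1 = i.val then -1 else 0)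
    (y : Fin k → ℝ)
    (hy : ∀ j : Fin k, y j =
      ξ * q ^ (k + 1) / (1 + q ^ (2 * k + 1)) * ((q ^ (j.val + 1))⁻¹ - q ^ (j.val + 1))) :
    A.mulVec y = fun i : Fin k => if i.val = k - 1 then 2 * ξ / (α + 1) else 0 := by
  set c := 2 + 2 * n * μ / (L - μ)
  set K := ξ * q ^ (k + 1) / (1 + q ^ (2 * k + 1))
  have hq_ne : q ≠ 0 := hq0.ne'
  have hcq : c * q = q ^ 2 + 1 := by linear_combination -hroot
  have hy' : y = fun j => K * invPowSubPow q (j.val + 1) := funext hy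
  have hrec (m : ℕ) := invPowSubPow_recurrence hq_ne hcq m
  funext i
  rw [hy', tridiagonal_mulVec_apply c _ A hA (fun m => K * invPowSubPow q m) (by simp)]
  split_ifs with hi
  · have hk : i.val + 1 = k := by omega
    have hb : 1 + 2 * n * μ / (L - μ) = c - 1 := by ring
    have hden : 1 + q ^ (2 * k + 1) ≠ 0 := by positivity
    have hlast : K * (invPowSubPow q (k + 1) - invPowSubPow q k) = 2 * ξ / (α + 1) := by
      have h1q : 2 * ξ / (α + 1) = ξ * (1 - q) := by
        rw [hq]
        field_simp
        ring
      rw [invPowSubPow_succ_sub hq_ne, h1q]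
      simp only [K]
      field_simp
    rw [← hk] at hlast
    rw [hb]
    linear_combination K * hrec i.val + hlast
  · linear_combination K * hrec i.val

theorem stmt_9 (n : ℕ) (hn : 1 ≤ n) (L μ : ℝ) (hμ : 0 < μ) (hL : μ < L)
    (α q ξ : ℝ) (hα : 1 < α) (hq : q = (α - 1) / (α + 1))
    (hq0 : 0 < q) (hq1 : q < 1)
    (hroot : q ^ 2 - (2 + 2 * n * μ / (L - μ)) * q + 1 = 0)
    (k : ℕ) (hk : 1 ≤ k)
    (A : Matrix (Fin k) (Fin k) ℝ)
    (hA : ∀ i j : Fin k, A i j =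
      if i = j then (if i.val = k - 1 then 1 + 2 * n * μ / (L - μ) else 2 + 2 * n * μ / (L - μ))
      else if i.val + 1 = j.val ∨ j.val + 1 = i.val then -1 else 0)
    (y : Fin k → ℝ)
    (hy : ∀ j : Fin k, y j =
      ξ * q ^ (k + 1) / (1 + q ^ (2 * k + 1)) * ((q ^ (j.val + 1))⁻¹ - q ^ (j.val + 1))) :
    A.mulVec y = fun i : Fin k => if i.val = k - 1 then 2 * ξ / (α + 1) else 0 :=
  stmt_9_general n L μ α q ξ hα hq hq0 hroot k A hA y hy
end

section
/- Let L > μ > 0, n ≥ 1, and let q ∈ (0,1) satisfy q² - (2 + 2nμ/(L-μ))q + 1 = 0. For 1 ≤ k < m, the function value gap satisfies min over x with first m-k coordinates zero of F_SC(x) minus the global minimum equals Δ·q^(2k)·(1+q)/(1+q^(2k+1)), which is at least Δ·q^(2k). -/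
/-!
The objective is `x ↦ xᵀMx/2 - gᵀx` with `M = a·A(ω) + μ·I` positive semidefinite (`A(ω)` is a
sum of squares), so on any coordinate subspace a point whose gradient `Mx - g` vanishes on the
free coordinates is a minimiser, with value `-gᵀx/2`. Because `q` solves the characteristic
equation `μq = a(1-q)²` of the interior rows, the geometric sequence `ξ q^(m-j)` is the critical
point on all of `ℝ^m`, and on the subspace of vectors supported on the last `k` coordinates the
critical point is the combination of `q^t` and `q^(-t)` that vanishes just before the support,
scaled to satisfy the last row. Comparing the two values `-gᵀx/2` gives the gap.
-/

open Finset Matrix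

section Quadratic

variable {ι : Type*} [Fintype ι]

noncomputable def quadObjective (M : Matrix ι ι ℝ) (g x : ι → ℝ) : ℝ :=
  x ⬝ᵥ M *ᵥ x / 2 - g ⬝ᵥ x

variable {M : Matrix ι ι ℝ} {g : ι → ℝ}

theorem quadObjective_add (hM : M.IsSymm) (v w : ι → ℝ) :
    quadObjective M g (v + w) =
      quadObjective M g v + (M *ᵥ v - g) ⬝ᵥ w + w ⬝ᵥ M *ᵥ w / 2 := by
  have hsymm : v ⬝ᵥ M *ᵥ w = M *ᵥ v ⬝ᵥ w := by
    rw [dotProduct_mulVec, ← mulVec_transpose, hM.eq]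
  simp only [quadObjective, mulVec_add, add_dotProduct, dotProduct_add, sub_dotProduct, hsymm,
    dotProduct_comm w (M *ᵥ v)]
  ring

theorem quadObjective_eq_neg_half_dotProduct {v : ι → ℝ} (h : (M *ᵥ v - g) ⬝ᵥ v = 0) :
    quadObjective M g v = -(g ⬝ᵥ v) / 2 := by
  rw [sub_dotProduct, dotProduct_comm] at h
  rw [quadObjective]
  linarith

theorem Matrix.PosSemidef.isLeast_quadObjective (hM : M.PosSemidef) {S : Set (ι → ℝ)}
    {v : ι → ℝ} (hv : v ∈ S) (hcrit : ∀ x ∈ S, (M *ᵥ v - g) ⬝ᵥ (x - v) = 0) :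
    IsLeast (quadObjective M g '' S) (quadObjective M g v) := by
  refine ⟨⟨v, hv, rfl⟩, ?_⟩
  rintro _ ⟨x, hx, rfl⟩
  have hsymm : M.IsSymm := isHermitian_iff_isSymm.mp hM.1
  have hpos := hM.dotProduct_mulVec_nonneg (x - v)
  rw [star_trivial] at hpos
  rw [← add_sub_cancel v x, quadObjective_add hsymm, hcrit x hx]
  linarith

theorem Matrix.PosSemidef.isLeast_quadObjective_of_residual (hM : M.PosSemidef) (p : ι → Prop)
    {v : ι → ℝ} (hv : ∀ j, p j → v j = 0) (hres : ∀ j, ¬ p j → (M *ᵥ v - g) j = 0) :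
    IsLeast (quadObjective M g '' {x | ∀ j, p j → x j = 0}) (-(g ⬝ᵥ v) / 2) := by
  have horth : ∀ w : ι → ℝ, (∀ j, p j → w j = 0) → (M *ᵥ v - g) ⬝ᵥ w = 0 := fun w hw =>
    sum_eq_zero fun j _ => by
      by_cases hj : p j
      · rw [hw j hj, mul_zero]
      · rw [hres j hj, zero_mul]
  rw [← quadObjective_eq_neg_half_dotProduct (horth v hv)]
  exact hM.isLeast_quadObjective hv fun x hx =>
    horth (x - v) fun j hj => by rw [Pi.sub_apply, hx j hj, hv j hj, sub_self]

theorem quadObjective_two_smul_add_smul_one [DecidableEq ι] (A : Matrix ι ι ℝ) (c μ β : ℝ) (i : ι)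
    (x : ι → ℝ) :
    quadObjective ((2 * c) • A + μ • 1) (β • Pi.single i 1) x =
      c * x ⬝ᵥ A *ᵥ x + μ / 2 * ∑ j, x j ^ 2 - β * x i := by
  simp only [quadObjective, add_mulVec, smul_mulVec, one_mulVec, dotProduct_add, dotProduct_smul,
    smul_dotProduct, single_dotProduct, smul_eq_mul, one_mul]
  rw [show x ⬝ᵥ x = ∑ j, x j ^ 2 by simp only [dotProduct, sq]]
  ring

end Quadratic

namespace WorstCaseQuadratic

noncomputable def tridiag (ω : ℝ) (m : ℕ) : Matrix (Fin m) (Fin m) ℝ :=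
  Matrix.of fun i j =>
    if i = j then (if i.val = 0 then ω ^ 2 + 1 else if i.val = m - 1 then 1 else 2)
    else if i.val + 1 = j.val ∨ j.val + 1 = i.val then -1 else 0

variable {ω : ℝ} {m : ℕ}

theorem tridiag_mulVec_apply (u : ℕ → ℝ) (i : Fin m) :
    (tridiag ω m *ᵥ fun j => u j) i =
      (if i.val = 0 then ω ^ 2 + 1 else if i.val = m - 1 then 1 else 2) * u i
        - (if i.val + 1 < m then u (i.val + 1) else 0)
        - (if i.val = 0 then 0 else u (i.val - 1)) := by
  have hentry : ∀ j : Fin m, tridiag ω m i j * u j =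
      (if j = i then (if i.val = 0 then ω ^ 2 + 1 else if i.val = m - 1 then 1 else 2) * u i
        else 0) - (if j.val = i.val + 1 then u j else 0)
        - (if j.val + 1 = i.val then u j else 0) := by
    intro j
    by_cases hij : j = i
    · subst hij; simp [tridiag]
    · have hji : i ≠ j := Ne.symm hij
      simp only [tridiag, of_apply, if_neg hji, if_neg hij]
      split_ifs <;> first | omega | ring
  have hsucc : ∑ j : Fin m, (if j.val = i.val + 1 then u j else 0) =
      if i.val + 1 < m then u (i.val + 1) else 0 := by
    rw [Fin.sum_univ_eq_sum_range (fun t => if t = i.val + 1 then u t else 0), sum_ite_eq']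
    simp only [mem_range]
  have hpred : ∑ j : Fin m, (if j.val + 1 = i.val then u j else 0) =
      if i.val = 0 then 0 else u (i.val - 1) := by
    rw [Fin.sum_univ_eq_sum_range (fun t => if t + 1 = i.val then u t else 0)]
    split_ifs with hi
    · exact sum_eq_zero fun t _ => if_neg (by omega)
    · rw [sum_congr rfl fun t _ => if_congr (show t + 1 = i.val ↔ t = i.val - 1 by omega) rfl rfl,
        sum_ite_eq', if_pos (mem_range.2 (by omega))]
  simp only [mulVec, dotProduct, hentry, sum_sub_distrib, sum_ite_eq', mem_univ, if_true,
    hsucc, hpred]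

theorem dotProduct_tridiag_mulVec (hm : 2 ≤ m) (u : ℕ → ℝ) :
    (fun j : Fin m => u j) ⬝ᵥ tridiag ω m *ᵥ (fun j => u j) =
      ω ^ 2 * u 0 ^ 2 + ∑ i ∈ range (m - 1), (u i - u (i + 1)) ^ 2 := by
  obtain ⟨N, rfl⟩ : ∃ N, m = N + 2 := ⟨m - 2, by omega⟩
  set f : ℕ → ℝ := fun t => u t * ((if t = 0 then ω ^ 2 + 1 else if t = N + 2 - 1 then 1 else 2)
    * u t - (if t + 1 < N + 2 then u (t + 1) else 0) - (if t = 0 then 0 else u (t - 1)))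
  -- Row `t` of the quadratic form is a squared difference up to the telescoping term `φ`.
  set φ : ℕ → ℝ := fun s => (u s - u (s + 1)) * u (s + 1)
  have hfirst : f 0 = ω ^ 2 * u 0 ^ 2 + (u 0 - u 1) ^ 2 + φ 0 := by
    simp only [f, φ]
    split_ifs <;> first | omega | contradiction | ring
  have hinterior : ∀ t ∈ range N,
      f (t + 1) = (u (t + 1) - u (t + 1 + 1)) ^ 2 + (φ (t + 1) - φ t) := by
    intro t ht
    have := mem_range.1 ht
    simp only [f, φ, Nat.add_sub_cancel]
    split_ifs <;> first | omega | contradiction | ring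
  have hlast : f (N + 1) = -φ N := by
    simp only [f, φ, Nat.add_sub_cancel]
    split_ifs <;> first | omega | contradiction | ring
  calc _ = ∑ t ∈ range (N + 2), f t := by
        simp only [dotProduct, tridiag_mulVec_apply]
        exact Fin.sum_univ_eq_sum_range f _
    _ = _ := by
        rw [sum_range_succ, sum_range_succ', sum_congr rfl hinterior, sum_add_distrib,
          sum_range_sub, hfirst, hlast, show N + 2 - 1 = N + 1 from rfl, sum_range_succ']
        ring

theorem tridiag_posSemidef (hm : 2 ≤ m) : (tridiag ω m).PosSemidef := by
  refine PosSemidef.of_dotProduct_mulVec_nonneg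
    (isHermitian_iff_isSymm.mpr (IsSymm.ext fun i j => ?_)) fun x => ?_
  · by_cases hij : i = j
    · rw [hij]
    · simp only [tridiag, of_apply, if_neg hij, if_neg (Ne.symm hij), or_comm]
  · have hx : x = fun j : Fin m => Function.extend Fin.val x 0 j :=
      funext fun j => (Fin.val_injective.extend_apply x 0 j).symm
    rw [star_trivial, hx, dotProduct_tridiag_mulVec hm]
    positivity

variable {a μ q : ℝ}

theorem smul_tridiag_add_smul_one_posSemidef (hm : 2 ≤ m) (ha : 0 ≤ a) (hμ : 0 ≤ μ) :
    (a • tridiag ω m + μ • 1).PosSemidef :=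
  ((tridiag_posSemidef hm).smul ha).add (PosSemidef.one.smul hμ)

theorem residual_apply (hm : 2 ≤ m) (β : ℝ) (u : ℕ → ℝ) (i : Fin m) :
    ((a • tridiag ω m + μ • 1) *ᵥ (fun j : Fin m => u j) -
        β • Pi.single (⟨m - 1, by omega⟩ : Fin m) (1 : ℝ) : Fin m → ℝ) i =
      a * ((if i.val = 0 then ω ^ 2 + 1 else if i.val = m - 1 then 1 else 2) * u i
        - (if i.val + 1 < m then u (i.val + 1) else 0) - (if i.val = 0 then 0 else u (i.val - 1)))
      + μ * u i - (if i.val = m - 1 then β else 0) := by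
  simp [add_mulVec, smul_mulVec, tridiag_mulVec_apply, Pi.single_apply, Fin.ext_iff]

def globalMinimizer (ξ q : ℝ) (m t : ℕ) : ℝ := ξ * q ^ (m - t)

theorem residual_globalMinimizer (hm : 2 ≤ m) (hω : ω ^ 2 = 1 - q)
    (hchar : μ * q = a * (1 - q) ^ 2) (ξ : ℝ) (i : Fin m) :
    ((a • tridiag ω m + μ • 1) *ᵥ (fun j : Fin m => globalMinimizer ξ q m j) -
        (a * (1 - q) * ξ) • Pi.single (⟨m - 1, by omega⟩ : Fin m) (1 : ℝ) : Fin m → ℝ) i = 0 := by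
  obtain ⟨i, hi⟩ := i
  rw [residual_apply hm]
  simp only [globalMinimizer]
  obtain ⟨N, rfl⟩ : ∃ N, m = N + 2 := ⟨m - 2, by omega⟩
  rcases Nat.eq_zero_or_pos i with rfl | hpos
  · simp only [show 0 + 1 < N + 2 by omega, if_true, if_neg (show 0 ≠ N + 2 - 1 by omega)]
    rw [show N + 2 - 0 = (N + 1) + 1 by omega, show N + 2 - (0 + 1) = N + 1 by omega, hω]
    linear_combination (ξ * q ^ (N + 1)) * hchar
  rcases eq_or_lt_of_le (show i ≤ N + 1 by omega) with rfl | hlt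
  · simp only [if_neg (show N + 1 ≠ 0 by omega), if_pos (show N + 1 = N + 2 - 1 by omega),
      if_neg (show ¬ (N + 1 + 1 < N + 2) by omega)]
    rw [show N + 2 - (N + 1) = 1 by omega, show N + 2 - (N + 1 - 1) = 2 by omega]
    linear_combination ξ * hchar
  · obtain ⟨e, he⟩ : ∃ e, N + 2 - (i + 1) = e := ⟨_, rfl⟩
    simp only [if_neg hpos.ne', if_neg (show i ≠ N + 2 - 1 by omega),
      if_pos (show i + 1 < N + 2 by omega)]
    rw [he, show N + 2 - i = e + 1 by omega, show N + 2 - (i - 1) = e + 2 by omega]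
    linear_combination (ξ * q ^ e) * hchar

-- Below the support the truncated `t - (m - k - 1)` is `0` and the two powers cancel.
noncomputable def restrictedMinimizer (ξ q : ℝ) (m k t : ℕ) : ℝ :=
  ξ * q / (1 + q ^ (2 * k + 1)) * (q ^ (k - (t - (m - k - 1))) - q ^ (k + (t - (m - k - 1))))

theorem restrictedMinimizer_eq_zero (ξ q : ℝ) {m k t : ℕ} (ht : t < m - k) :
    restrictedMinimizer ξ q m k t = 0 := by
  rw [restrictedMinimizer, show t - (m - k - 1) = 0 by omega, add_zero, tsub_zero, sub_self,
    mul_zero]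

theorem residual_restrictedMinimizer {k : ℕ} (hk : 1 ≤ k) (hkm : k < m) (hq : 0 < q)
    (hchar : μ * q = a * (1 - q) ^ 2) (ξ : ℝ) (i : Fin m) (hi : m - k ≤ i) :
    ((a • tridiag ω m + μ • 1) *ᵥ (fun j : Fin m => restrictedMinimizer ξ q m k j) -
        (a * (1 - q) * ξ) • Pi.single (⟨m - 1, by omega⟩ : Fin m) (1 : ℝ) : Fin m → ℝ) i = 0 := by
  obtain ⟨i, hi'⟩ := i
  simp only at hi
  rw [residual_apply (by omega)]
  simp only [restrictedMinimizer, if_neg (show i ≠ 0 by omega)]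
  set C := ξ * q / (1 + q ^ (2 * k + 1))
  have hC : C * (1 + q ^ (2 * k + 1)) = ξ * q := div_mul_cancel₀ _ (by positivity)
  obtain ⟨K, rfl⟩ : ∃ K, k = K + 1 := ⟨k - 1, by omega⟩
  rcases eq_or_lt_of_le (show i ≤ m - 1 by omega) with rfl | hlt
  · simp only [if_true, if_neg (show ¬ (m - 1 + 1 < m) by omega)]
    rw [show K + 1 - (m - 1 - (m - (K + 1) - 1)) = 0 by omega,
      show K + 1 + (m - 1 - (m - (K + 1) - 1)) = 2 * K + 2 by omega,
      show K + 1 - (m - 1 - 1 - (m - (K + 1) - 1)) = 1 by omega,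
      show K + 1 + (m - 1 - 1 - (m - (K + 1) - 1)) = 2 * K + 1 by omega]
    refine (mul_eq_zero.1 ?_).resolve_left hq.ne'
    linear_combination (a * (1 - q)) * hC + (C * (1 - q ^ (2 * K + 2))) * hchar
  · obtain ⟨s, hs⟩ : ∃ s, K + 1 - (i + 1 - (m - (K + 1) - 1)) = s := ⟨_, rfl⟩
    obtain ⟨f, hf⟩ : ∃ f, K + 1 + (i - 1 - (m - (K + 1) - 1)) = f := ⟨_, rfl⟩
    simp only [if_neg hlt.ne, if_pos (show i + 1 < m by omega)]
    rw [hs, hf, show K + 1 - (i - (m - (K + 1) - 1)) = s + 1 by omega,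
      show K + 1 + (i - (m - (K + 1) - 1)) = f + 1 by omega,
      show K + 1 - (i - 1 - (m - (K + 1) - 1)) = s + 2 by omega,
      show K + 1 + (i + 1 - (m - (K + 1) - 1)) = f + 2 by omega]
    linear_combination (C * q ^ s - C * q ^ f) * hchar

theorem isLeast_range_quadObjective (hm : 2 ≤ m) (ha : 0 ≤ a) (hμ : 0 ≤ μ)
    (hω : ω ^ 2 = 1 - q) (hchar : μ * q = a * (1 - q) ^ 2) {ξ β : ℝ} (hβ : β = a * (1 - q) * ξ) :
    IsLeast (Set.range (quadObjective (a • tridiag ω m + μ • 1)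
        (β • Pi.single (⟨m - 1, by omega⟩ : Fin m) (1 : ℝ))))
      (-(a * (1 - q) * q * ξ ^ 2) / 2) := by
  subst hβ
  have hM := smul_tridiag_add_smul_one_posSemidef (ω := ω) hm ha hμ
  have := hM.isLeast_quadObjective_of_residual (fun _ => False)
    (g := (a * (1 - q) * ξ) • Pi.single (⟨m - 1, by omega⟩ : Fin m) (1 : ℝ))
    (v := fun j => globalMinimizer ξ q m j) (fun _ h => h.elim)
    (fun j _ => residual_globalMinimizer hm hω hchar ξ j)
  rw [← Set.image_univ, ← show {x : Fin m → ℝ | ∀ j, False → x j = 0} = Set.univ from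
    Set.eq_univ_of_forall fun _ _ h => h.elim]
  convert this using 2
  rw [smul_dotProduct, single_dotProduct, one_mul, smul_eq_mul, globalMinimizer,
    show m - (m - 1) = 1 by omega]
  ring

theorem isLeast_image_quadObjective {k : ℕ} (hk : 1 ≤ k) (hkm : k < m) (ha : 0 ≤ a)
    (hμ : 0 ≤ μ) (hq : 0 < q) (hchar : μ * q = a * (1 - q) ^ 2) {ξ β : ℝ}
    (hβ : β = a * (1 - q) * ξ) :
    IsLeast (quadObjective (a • tridiag ω m + μ • 1)
        (β • Pi.single (⟨m - 1, by omega⟩ : Fin m) (1 : ℝ)) ''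
          {x | ∀ j : Fin m, j.val < m - k → x j = 0})
      (-(a * (1 - q) * q * ξ ^ 2 * (1 - q ^ (2 * k)) / (1 + q ^ (2 * k + 1))) / 2) := by
  subst hβ
  have hM := smul_tridiag_add_smul_one_posSemidef (ω := ω) (show 2 ≤ m by omega) ha hμ
  have := hM.isLeast_quadObjective_of_residual (fun j => j.val < m - k)
    (g := (a * (1 - q) * ξ) • Pi.single (⟨m - 1, by omega⟩ : Fin m) (1 : ℝ))
    (v := fun j => restrictedMinimizer ξ q m k j)
    (fun _ h => restrictedMinimizer_eq_zero ξ q h)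
    (fun j h => residual_restrictedMinimizer hk hkm hq hchar ξ j (not_lt.1 h))
  convert this using 2
  rw [smul_dotProduct, single_dotProduct, one_mul, smul_eq_mul, restrictedMinimizer,
    show m - 1 - (m - k - 1) = k by omega, Nat.sub_self, pow_zero, ← two_mul]
  field_simp

end WorstCaseQuadratic

open WorstCaseQuadratic

theorem stmt_16 (m n k : ℕ) (hn : 1 ≤ n) (hk1 : 1 ≤ k) (hkm : k < m)
    (L μ α q Δ ξ ω : ℝ) (hμ : 0 < μ) (hL : μ < L) (hΔ : 0 < Δ) (hα : 1 < α)
    (hq : q = (α - 1) / (α + 1)) (hq0 : 0 < q) (hq1 : q < 1)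
    (hroot : q ^ 2 - (2 + 2 * n * μ / (L - μ)) * q + 1 = 0)
    (hω : ω = Real.sqrt (2 / (α + 1)))
    (hξ : ξ = Real.sqrt (2 * Δ * n * (α + 1) ^ 2 / ((L - μ) * (α - 1))))
    (A : Matrix (Fin m) (Fin m) ℝ)
    (hA : ∀ i j : Fin m, A i j =
      if i = j then (if i.val = 0 then ω ^ 2 + 1 else if i.val = m - 1 then 1 else 2)
      else if i.val + 1 = j.val ∨ j.val + 1 = i.val then -1 else 0)
    (F : (Fin m → ℝ) → ℝ)
    (hF : ∀ x : Fin m → ℝ, F x =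
      (L - μ) / (4 * n) * dotProduct x (A.mulVec x)
        + μ / 2 * ∑ j, x j ^ 2
        - (L - μ) / (n * (α + 1)) * ξ * x ⟨m - 1, by omega⟩) :
    sInf (F '' {x | ∀ j : Fin m, j.val < m - k → x j = 0}) - sInf (Set.range F)
      = Δ * q ^ (2 * k) * (1 + q) / (1 + q ^ (2 * k + 1)) ∧
    Δ * q ^ (2 * k) ≤
      sInf (F '' {x | ∀ j : Fin m, j.val < m - k → x j = 0}) - sInf (Set.range F) := by
  have hA' : A = tridiag ω m := by ext i j; rw [hA]; rfl
  have hFq : F = quadObjective ((2 * ((L - μ) / (4 * n))) • tridiag ω m + μ • 1)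
      (((L - μ) / (n * (α + 1)) * ξ) • Pi.single (⟨m - 1, by omega⟩ : Fin m) (1 : ℝ)) :=
    funext fun x => by rw [hF, quadObjective_two_smul_add_smul_one, hA']
  set a := 2 * ((L - μ) / (4 * n)) with ha
  have hn0 : (0 : ℝ) < n := by exact_mod_cast hn
  have hLμ : 0 < L - μ := sub_pos.2 hL
  have hα1 : 0 < α - 1 := sub_pos.2 hα
  have h1q : 1 - q = 2 / (α + 1) := by rw [hq]; field_simp; ring
  have hω2 : ω ^ 2 = 1 - q := by rw [hω, Real.sq_sqrt (by positivity), h1q]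
  have hchar : μ * q = a * (1 - q) ^ 2 := by
    rw [ha]; field_simp at hroot ⊢; linear_combination -2 * hroot
  have hβ : (L - μ) / (n * (α + 1)) * ξ = a * (1 - q) * ξ := by rw [ha, h1q]; field_simp; ring
  have hscale : a * (1 - q) * q * ξ ^ 2 = 2 * Δ := by
    rw [hξ, Real.sq_sqrt (by positivity), h1q, hq, ha]
    field_simp
    norm_num
  have ha0 : 0 ≤ a := by positivity
  rw [hFq, (isLeast_image_quadObjective hk1 hkm ha0 hμ.le hq0 hchar hβ).csInf_eq,
    (isLeast_range_quadObjective (by omega) ha0 hμ.le hω2 hchar hβ).csInf_eq, hscale]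
  have hgap : -(2 * Δ * (1 - q ^ (2 * k)) / (1 + q ^ (2 * k + 1))) / 2 - -(2 * Δ) / 2 =
      Δ * q ^ (2 * k) * (1 + q) / (1 + q ^ (2 * k + 1)) := by
    field_simp
    ring
  refine ⟨hgap, hgap ▸ (le_div_iff₀ (by positivity)).2
    (mul_le_mul_of_nonneg_left ?_ (by positivity))⟩
  exact add_le_add_right (pow_le_of_le_one hq0.le hq1.le (Nat.succ_ne_zero _)) 1
end

section
/- Let c = p1 + p2 with 0 < p1 ≤ p2 ≤ 1, c < 2, and fix an integer j ≥ 2. Define f(p) = (( c - p)(1-p)^j - p(1+p-c)^j)/(c - 2p) for 0 < p < c/2. Then f is strictly decreasing on (0, c/2). -/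
/-!
Put `a = 1 - p` and `b = 1 + p - c`, so that `c - p = 1 - b`, `p = 1 - a` and `c - 2p = a - b`.
With `j = n + 1`, differentiating and simplifying by `(a - b) ∑ₖ aᵏ bⁿ⁻ᵏ = aⁿ⁺¹ - bⁿ⁺¹` gives
`f'(p) = -(∑_{k ≤ n} (aᵏ - bᵏ) ((1 - b) aⁿ⁻ᵏ - (1 - a) bⁿ⁻ᵏ)) / (a - b)`.
For `0 < p < c / 2` and `c < 2` we have `|b| < a` and `0 < 1 - a < 1 - b`, so every summand is
nonnegative and the one with `k = 1` is positive.
-/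

open Finset

section CommRing

variable {R : Type*} [CommRing R]

theorem sum_range_sub_pow_mul_sub_pow_mul_sub (a b u v : R) (n : ℕ) :
    (∑ k ∈ range (n + 1), (a ^ k - b ^ k) * (u * a ^ (n - k) - v * b ^ (n - k))) * (a - b) =
      (n + 1) * (u * a ^ n + v * b ^ n) * (a - b) - (u + v) * (a ^ (n + 1) - b ^ (n + 1)) := by
  have hterm : ∀ k ∈ range (n + 1), (a ^ k - b ^ k) * (u * a ^ (n - k) - v * b ^ (n - k)) =
      (u * a ^ n + v * b ^ n) - (v * (a ^ k * b ^ (n - k)) + u * (a ^ (n - k) * b ^ k)) := by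
    intro k hk
    have hkn : k + (n - k) = n := Nat.add_sub_cancel' (Nat.lt_succ_iff.mp (mem_range.mp hk))
    rw [← hkn]
    simp only [pow_add, Nat.add_sub_cancel_left]
    ring
  have hreflect :
      ∑ k ∈ range (n + 1), a ^ (n - k) * b ^ k = ∑ k ∈ range (n + 1), a ^ k * b ^ (n - k) := by
    rw [← sum_range_reflect]
    refine sum_congr rfl fun k hk => ?_
    rw [Nat.add_sub_cancel, Nat.sub_sub_self (Nat.lt_succ_iff.mp (mem_range.mp hk))]
  have hgeom := geom_sum₂_mul a b (n + 1)
  simp only [Nat.add_sub_cancel] at hgeom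
  rw [sum_congr rfl hterm, sum_sub_distrib, sum_const, card_range, nsmul_eq_mul, sum_add_distrib,
    ← mul_sum, ← mul_sum, hreflect]
  push_cast
  linear_combination (-(u + v)) * hgeom

end CommRing

section Ordered

variable {R : Type*} [CommRing R] [LinearOrder R] [IsStrictOrderedRing R]

theorem pow_le_pow_of_abs_le {a b : R} (h : |b| ≤ a) (k : ℕ) : b ^ k ≤ a ^ k :=
  (le_abs_self _).trans ((abs_pow b k).trans_le (pow_le_pow_left₀ (abs_nonneg b) h k))

theorem sum_range_sub_pow_mul_sub_pow_pos {a b u v : R} (hba : |b| < a) (hv : 0 ≤ v) (hvu : v < u)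
    {n : ℕ} (hn : 1 ≤ n) :
    0 < ∑ k ∈ range (n + 1), (a ^ k - b ^ k) * (u * a ^ (n - k) - v * b ^ (n - k)) := by
  have ha : 0 < a := (abs_nonneg b).trans_lt hba
  have hfactor_pos : ∀ m : ℕ, 0 < u * a ^ m - v * b ^ m := fun m =>
    calc 0 < (u - v) * a ^ m := mul_pos (sub_pos.mpr hvu) (pow_pos ha m)
      _ ≤ u * a ^ m - v * b ^ m := by
        nlinarith [mul_le_mul_of_nonneg_left (pow_le_pow_of_abs_le hba.le m) hv]
  refine sum_pos' (fun k _ => mul_nonneg ?_ (hfactor_pos _).le) ⟨1, by simp; omega, ?_⟩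
  · exact sub_nonneg.mpr (pow_le_pow_of_abs_le hba.le k)
  · exact mul_pos (by simpa using (le_abs_self b).trans_lt hba) (hfactor_pos _)

end Ordered

theorem hasDerivAt_geom_tail (c x : ℝ) (n : ℕ) (hx : c - 2 * x ≠ 0) :
    HasDerivAt (fun p => ((c - p) * (1 - p) ^ (n + 1) - p * (1 + p - c) ^ (n + 1)) / (c - 2 * p))
      (-(∑ k ∈ range (n + 1), ((1 - x) ^ k - (1 + x - c) ^ k) *
          ((c - x) * (1 - x) ^ (n - k) - x * (1 + x - c) ^ (n - k))) / (c - 2 * x)) x := by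
  have hnum :=
    (((hasDerivAt_id x).const_sub c).mul (((hasDerivAt_id x).const_sub 1).pow (n + 1))).sub
      ((hasDerivAt_id x).mul ((((hasDerivAt_id x).const_add 1).sub_const c).pow (n + 1)))
  refine (hnum.div (((hasDerivAt_id x).const_mul 2).const_sub c) hx).congr_deriv ?_
  have key := sum_range_sub_pow_mul_sub_pow_mul_sub (1 - x) (1 + x - c) (c - x) x n
  simp only [id, Pi.sub_apply, Pi.mul_apply, Pi.pow_apply, Nat.add_sub_cancel]
  rw [div_eq_div_iff (pow_ne_zero 2 hx) hx]
  push_cast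
  linear_combination (c - 2 * x) * key

theorem stmt_17_general (c : ℝ) (hc2 : c < 2) (j : ℕ) (hj : 2 ≤ j) :
    StrictAntiOn
      (fun p : ℝ => ((c - p) * (1 - p) ^ j - p * (1 + p - c) ^ j) / (c - 2 * p))
      (Set.Ioo 0 (c / 2)) := by
  obtain ⟨n, rfl⟩ : ∃ n, j = n + 1 := ⟨j - 1, by omega⟩
  have hderiv : ∀ x ∈ Set.Ioo 0 (c / 2), HasDerivAt _ _ x := fun x hx =>
    hasDerivAt_geom_tail c x n (by linarith [hx.2])
  refine strictAntiOn_of_hasDerivWithinAt_neg (convex_Ioo 0 (c / 2))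
    (continuousOn_of_forall_continuousAt fun x hx => (hderiv x hx).continuousAt)
    (fun x hx => (hderiv x (interior_subset hx)).hasDerivWithinAt) fun x hx => ?_
  rw [interior_Ioo] at hx
  obtain ⟨hx0, hxc⟩ := hx
  refine div_neg_of_neg_of_pos (neg_neg_of_pos (sum_range_sub_pow_mul_sub_pow_pos ?_ hx0.le ?_ ?_))
    (by linarith)
  · exact abs_lt.mpr ⟨by linarith, by linarith⟩
  · linarith
  · omega

theorem stmt_17 (p1 p2 c : ℝ) (h1 : 0 < p1) (h12 : p1 ≤ p2) (h2 : p2 ≤ 1)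
    (hc : c = p1 + p2) (hc2 : c < 2) (j : ℕ) (hj : 2 ≤ j) :
    StrictAntiOn
      (fun p : ℝ => ((c - p) * (1 - p) ^ j - p * (1 + p - c) ^ j) / (c - 2 * p))
      (Set.Ioo 0 (c / 2)) :=
  stmt_17_general c hc2 j hj
end

section
/- Let λ1, λ2 be positive reals with λ2 < (2+2√2)λ1 and λ3 > 0. If the system λ1·z1 + λ3(z1 - z2) + λ2·z1²(z1-1)/(1+z1²) = 0 and λ1·z2 + λ3(z2 - z1) + λ2·z2²(z2-1)/(1+z2²) = 0 has a solution with z1·z2 ≠ 0, then both z2/z1 > 1 and z1/z2 > 1 hold, a contradiction; hence no such solution exists. -/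
/-!
Write each equation as `zᵢ · gᵢ + λ₃ (zᵢ - zⱼ) = 0` with `gᵢ = λ₁ + λ₂ zᵢ(zᵢ - 1)/(1 + zᵢ²)`.
Since `z(z - 1)/(1 + z²) ≥ (1 - √2)/2` and `λ₂ < (2 + 2√2) λ₁`, every `gᵢ` is positive.
Multiplying the equations by `z₁` and `z₂` and adding gives
`z₁² g₁ + z₂² g₂ + λ₃ (z₁ - z₂)² = 0`, forcing `z₁ = z₂ = 0`.
-/

open Real

lemma one_sub_sqrt_two_div_two_le (z : ℝ) : (1 - √2) / 2 ≤ z * (z - 1) / (1 + z ^ 2) := by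
  rw [le_div_iff₀ (by positivity)]
  -- the difference is `((√2 + 1) z - 1)² / (2 (√2 + 1))`
  nlinarith [sq_nonneg ((√2 + 1) * z - 1), sq_sqrt (zero_le_two : (0 : ℝ) ≤ 2), sqrt_nonneg 2]

lemma add_mul_div_one_add_sq_pos {a b : ℝ} (hb : 0 ≤ b) (hab : b < (2 + 2 * √2) * a) (z : ℝ) :
    0 < a + b * (z * (z - 1) / (1 + z ^ 2)) := by
  have hbound : b * ((1 - √2) / 2) ≤ b * (z * (z - 1) / (1 + z ^ 2)) :=
    mul_le_mul_of_nonneg_left (one_sub_sqrt_two_div_two_le z) hb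
  -- `(√2 - 1)/2` is the inverse of `2 + 2√2`
  nlinarith [sq_sqrt (zero_le_two : (0 : ℝ) ≤ 2), sqrt_nonneg 2]

lemma eq_zero_of_mul_add_mul_sub_eq_zero {x y a b c : ℝ} (ha : 0 < a) (hb : 0 ≤ b) (hc : 0 ≤ c)
    (ex : x * a + c * (x - y) = 0) (ey : y * b + c * (y - x) = 0) : x = 0 := by
  have hsum : x ^ 2 * a + y ^ 2 * b + c * (x - y) ^ 2 = 0 := by
    linear_combination x * ex + y * ey
  by_contra hx
  have : 0 < x ^ 2 * a := by positivity
  nlinarith [mul_nonneg (sq_nonneg y) hb, mul_nonneg hc (sq_nonneg (x - y))]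

theorem stmt_19_general (lam1 lam2 lam3 : ℝ) (h2 : 0 < lam2)
    (h3 : lam2 < (2 + 2 * Real.sqrt 2) * lam1) (h4 : 0 < lam3) :
    ¬ ∃ z1 z2 : ℝ, z1 * z2 ≠ 0 ∧
      lam1 * z1 + lam3 * (z1 - z2) + lam2 * (z1 ^ 2 * (z1 - 1) / (1 + z1 ^ 2)) = 0 ∧
      lam1 * z2 + lam3 * (z2 - z1) + lam2 * (z2 ^ 2 * (z2 - 1) / (1 + z2 ^ 2)) = 0 := by
  rintro ⟨z1, z2, hne, e1, e2⟩
  have e1' : z1 * (lam1 + lam2 * (z1 * (z1 - 1) / (1 + z1 ^ 2))) + lam3 * (z1 - z2) = 0 := by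
    rw [← e1]; ring
  have e2' : z2 * (lam1 + lam2 * (z2 * (z2 - 1) / (1 + z2 ^ 2))) + lam3 * (z2 - z1) = 0 := by
    rw [← e2]; ring
  exact left_ne_zero_of_mul hne <| eq_zero_of_mul_add_mul_sub_eq_zero
    (add_mul_div_one_add_sq_pos h2.le h3 z1) (add_mul_div_one_add_sq_pos h2.le h3 z2).le h4.le
    e1' e2'

theorem stmt_19 (lam1 lam2 lam3 : ℝ) (h1 : 0 < lam1) (h2 : 0 < lam2)
    (h3 : lam2 < (2 + 2 * Real.sqrt 2) * lam1) (h4 : 0 < lam3) :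
    ¬ ∃ z1 z2 : ℝ, z1 * z2 ≠ 0 ∧
      lam1 * z1 + lam3 * (z1 - z2) + lam2 * (z1 ^ 2 * (z1 - 1) / (1 + z1 ^ 2)) = 0 ∧
      lam1 * z2 + lam3 * (z2 - z1) + lam2 * (z2 ^ 2 * (z2 - 1) / (1 + z2 ^ 2)) = 0 :=
  stmt_19_general lam1 lam2 lam3 h2 h3 h4
end
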